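/- Let k ≥ 1 and p ≥ 0 be fixed integers, and define the auxiliary operator H_{n,k}(f; x) = M_{n,k}(f; x) − f(x + ((1−k)/n)·x) + f(x). Then there exists a constant N_{p,k} > 0 such that for every integer n ≥ k + p + 2, every twice differentiable function g : [0,∞) → ℝ with g, g', g'' ∈ C_p, and every x > 0 (with x + ((1−k)/n)x ≥ 0), w_p(x)·|H_{n,k}(g; x) − g(x)| ≤ N_{p,k} · ‖g''‖_p · x²/n. -/

import Mathlib

open MeasureTheory Set

/-- The Gamma-type operator `M_{n,k}(f;x)`. -/
noncomputable def Mnk (n k : ℕ) (f : ℝ → ℝ) (x : ℝ) : ℝ :=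
  (((2 * n - k + 1).factorial : ℝ) * x ^ (n + 1) /
      ((n.factorial : ℝ) * ((n - k).factorial : ℝ))) *
    ∫ t in Ioi (0 : ℝ), t ^ (n - k) / (x + t) ^ (2 * n - k + 2) * f t

/-- The polynomial weight: `w_0 = 1`, `w_p(x) = 1/(1+x^p)` for `p ≥ 1`. -/
noncomputable def wp (p : ℕ) (x : ℝ) : ℝ := if p = 0 then 1 else 1 / (1 + x ^ p)

/-- The weighted sup-norm `‖f‖_p = sup_{x ≥ 0} w_p(x)|f(x)|`. -/
noncomputable def pNorm (p : ℕ) (f : ℝ → ℝ) : ℝ :=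
  ⨆ x : {x : ℝ // 0 ≤ x}, wp p x.val * |f x.val|

/-- Second symmetric difference `Δ_h² f`. -/
def Delta2 (h : ℝ) (f : ℝ → ℝ) (x : ℝ) : ℝ := f (x + 2 * h) - 2 * f (x + h) + f x

/-- Second weighted modulus of smoothness `ω_p²(f;δ)`. -/
noncomputable def omega2 (p : ℕ) (f : ℝ → ℝ) (δ : ℝ) : ℝ :=
  ⨆ h : {h : ℝ // 0 < h ∧ h ≤ δ}, pNorm p (Delta2 h.val f)

/-- First weighted modulus `ω_p¹(f;δ)`. -/
noncomputable def omega1 (p : ℕ) (f : ℝ → ℝ) (δ : ℝ) : ℝ :=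
  sSup {y : ℝ | ∃ t x : ℝ, 0 ≤ t ∧ 0 ≤ x ∧ |t - x| ≤ δ ∧ y = wp p x * |f t - f x|}

/-- Membership in the weighted space `C_p`: `w_p·f` is bounded and uniformly
continuous on `[0,∞)`. -/
def CpMem (p : ℕ) (f : ℝ → ℝ) : Prop :=
  (∃ B : ℝ, ∀ x ≥ (0 : ℝ), |wp p x * f x| ≤ B) ∧
    UniformContinuousOn (fun x => wp p x * f x) (Ici 0)

/-- Steklov mean `f_h`. -/
noncomputable def steklov (f : ℝ → ℝ) (h : ℝ) (x : ℝ) : ℝ :=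
  4 / h ^ 2 *
    ∫ s in (0 : ℝ)..(h / 2), ∫ t in (0 : ℝ)..(h / 2),
      (2 * f (x + s + t) - f (x + 2 * (s + t)))

/-!
`M_{n,k}` is a positive linear functional with Beta-integral moments
`M_{n,k}(t^j; x) = c_j x^j`, where `c_0 = 1` and `c_{j+1} = c_j r_j`, `r_j = (n-k+1+j)/(n-j)`.
The shift in `H_{n,k}` is exactly the mean `a = c_1 x`, and `M_{n,k}` reproduces affine
functions, so `H_{n,k}(g;x) - g(x) = M_{n,k}(g;x) - g(a)` is `M_{n,k}` applied to the Taylor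
remainder of `g` at `a`, which is at most `‖g''‖_p (1 + a^p + t^p) (t - a)^2`. The resulting
moments `M_{n,k}(t^j (t-a)^2; x) = c_j ((r_j - r_0)^2 + r_j (r_{j+1} - r_j)) x^(j+2)` are
`O(x^(j+2)/n)`, because consecutive ratios differ by `O(1/n)`; the weight absorbs `x^p`.
-/

open Filter Topology
open scoped Nat

section KernelIntegrals

variable {x : ℝ}

theorem integrableOn_pow_div_add_pow (hx : 0 < x) {m M : ℕ} (hM : m + 2 ≤ M) :
    IntegrableOn (fun t : ℝ => t ^ m / (x + t) ^ M) (Ioi 0) := by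
  obtain ⟨q, rfl⟩ : ∃ q, M = m + (q + 2) := ⟨M - m - 2, by omega⟩
  have hdom : IntegrableOn (fun t : ℝ => (t + x) ^ (-((q + 2 : ℕ) : ℝ))) (Ioi 0) :=
    integrableOn_add_rpow_Ioi_of_lt (by push_cast; linarith [q.cast_nonneg (α := ℝ)])
      (by linarith)
  have hcont : ContinuousOn (fun t : ℝ => t ^ m / (x + t) ^ (m + (q + 2))) (Ioi 0) :=
    ContinuousOn.div (by fun_prop) (by fun_prop) fun t (ht : 0 < t) => by positivity
  refine hdom.mono' (hcont.aestronglyMeasurable measurableSet_Ioi) ?_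
  filter_upwards [ae_restrict_mem measurableSet_Ioi] with t (ht : 0 < t)
  have hxt : 0 < x + t := by positivity
  rw [Real.rpow_neg (by positivity), Real.rpow_natCast, add_comm t, Real.norm_eq_abs,
    abs_of_nonneg (by positivity), pow_add, ← div_div, div_le_iff₀ (by positivity),
    inv_mul_cancel₀ (by positivity)]
  exact div_le_one_of_le₀ (pow_le_pow_left₀ ht.le (by linarith) m) (by positivity)

theorem integral_inv_add_pow (hx : 0 < x) (q : ℕ) :
    ∫ t in Ioi 0, 1 / (x + t) ^ (q + 2) = 1 / ((q + 1) * x ^ (q + 1)) := by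
  have hderiv : ∀ t ∈ Ici (0 : ℝ), HasDerivAt (fun t => -((q + 1) * (x + t) ^ (q + 1))⁻¹)
      (1 / (x + t) ^ (q + 2)) t := by
    intro t (ht : 0 ≤ t)
    have hxt : 0 < x + t := by positivity
    have hne : ((q : ℝ) + 1) * (x + t) ^ (q + 1) ≠ 0 := by positivity
    have h : HasDerivAt (fun t => ((q : ℝ) + 1) * (x + t) ^ (q + 1))
        ((q + 1) * ((q + 1) * (x + t) ^ q)) t := by
      simpa using (((hasDerivAt_id' t).const_add x).pow (q + 1)).const_mul ((q : ℝ) + 1)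
    refine (h.inv hne).neg.congr_deriv ?_
    field_simp
    ring
  have htendsto : Tendsto (fun t => -((q + 1) * (x + t) ^ (q + 1))⁻¹) atTop (𝓝 0) := by
    have hpow : Tendsto (fun t => ((q : ℝ) + 1) * (x + t) ^ (q + 1)) atTop atTop :=
      Tendsto.const_mul_atTop (by positivity) <|
        (tendsto_pow_atTop (by omega)).comp (tendsto_atTop_add_const_left _ x tendsto_id)
    simpa using hpow.inv_tendsto_atTop.neg
  rw [integral_Ioi_of_hasDerivAt_of_tendsto' hderiv
    (by simpa using integrableOn_pow_div_add_pow hx (m := 0) (M := q + 2) (by omega)) htendsto]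
  simp

theorem integral_pow_div_add_pow (hx : 0 < x) (m q : ℕ) :
    ∫ t in Ioi 0, t ^ m / (x + t) ^ (m + q + 2) =
      m ! * q ! / ((m + q + 1)! * x ^ (q + 1)) := by
  induction m generalizing q with
  | zero =>
    simp only [pow_zero, zero_add, Nat.factorial_zero, Nat.cast_one, one_mul]
    rw [integral_inv_add_pow hx q, Nat.factorial_succ]
    push_cast
    field_simp
  | succ m ih =>
    -- `t = (x + t) - x` lowers the power of `t` at the cost of raising `q`
    have hsplit : (fun t : ℝ => t ^ (m + 1) / (x + t) ^ (m + 1 + q + 2)) =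
        fun t => t ^ m / (x + t) ^ (m + q + 2) - x * (t ^ m / (x + t) ^ (m + (q + 1) + 2)) := by
      ext t
      rcases eq_or_ne (x + t) 0 with h | h
      · simp [h]
      · field_simp; ring
    rw [hsplit, integral_sub (integrableOn_pow_div_add_pow hx (by omega))
      ((integrableOn_pow_div_add_pow hx (by omega)).const_mul x), integral_const_mul, ih, ih,
      show m + (q + 1) + 1 = m + q + 1 + 1 by omega, show m + 1 + q + 1 = m + q + 1 + 1 by omega]
    simp only [Nat.factorial_succ]
    push_cast
    field_simp
    ring

end KernelIntegrals

section WeightedSpace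

variable {p : ℕ} {x : ℝ} {f : ℝ → ℝ}

theorem wp_pos (hx : 0 ≤ x) : 0 < wp p x := by
  unfold wp
  split_ifs <;> positivity

theorem wp_le_one (hx : 0 ≤ x) : wp p x ≤ 1 := by
  unfold wp
  split_ifs
  · rfl
  · exact div_le_one_of_le₀ (by linarith [pow_nonneg hx p]) (by positivity)

theorem wp_mul_pow_le_one (hx : 0 ≤ x) : wp p x * x ^ p ≤ 1 := by
  unfold wp
  split_ifs with hp
  · simp [hp]
  · rw [one_div_mul_eq_div]
    exact div_le_one_of_le₀ (by linarith) (by positivity)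

theorem one_le_wp_mul (hx : 0 ≤ x) : 1 ≤ wp p x * (1 + x ^ p) := by
  unfold wp
  split_ifs with hp
  · simp [hp]
  · rw [one_div_mul_eq_div, div_self (by positivity)]

theorem CpMem.wp_mul_abs_le_pNorm (hf : CpMem p f) (hx : 0 ≤ x) :
    wp p x * |f x| ≤ pNorm p f := by
  obtain ⟨B, hB⟩ := hf.1
  refine le_ciSup (f := fun y : {y : ℝ // 0 ≤ y} => wp p y * |f y|) ⟨B, ?_⟩ ⟨x, hx⟩
  rintro _ ⟨y, rfl⟩
  simpa only [abs_mul, abs_of_pos (wp_pos y.2)] using hB y y.2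

theorem CpMem.pNorm_nonneg (hf : CpMem p f) : 0 ≤ pNorm p f :=
  (mul_nonneg (wp_pos le_rfl).le (abs_nonneg _)).trans (hf.wp_mul_abs_le_pNorm le_rfl)

theorem CpMem.abs_le_pNorm_mul (hf : CpMem p f) (hx : 0 ≤ x) :
    |f x| ≤ pNorm p f * (1 + x ^ p) :=
  calc |f x| ≤ wp p x * (1 + x ^ p) * |f x| :=
        le_mul_of_one_le_left (abs_nonneg _) (one_le_wp_mul hx)
    _ = wp p x * |f x| * (1 + x ^ p) := by ring
    _ ≤ pNorm p f * (1 + x ^ p) := by gcongr; exact hf.wp_mul_abs_le_pNorm hx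

end WeightedSpace

theorem abs_sub_sub_mul_sub_le_of_hasDerivWithinAt {g g' g'' : ℝ → ℝ} {s : Set ℝ}
    {a t C : ℝ} (hs : Convex ℝ s) (hg : ∀ u ∈ s, HasDerivWithinAt g (g' u) s u)
    (hg' : ∀ u ∈ s, HasDerivWithinAt g' (g'' u) s u) (hC : ∀ u ∈ s, |g'' u| ≤ C)
    (ha : a ∈ s) (ht : t ∈ s) :
    |g t - g a - g' a * (t - a)| ≤ C * (t - a) ^ 2 := by
  have hI : uIcc a t ⊆ s := hs.ordConnected.uIcc_subset ha ht
  have hC0 : 0 ≤ C := (abs_nonneg _).trans (hC a ha)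
  have hg'_lip : ∀ u ∈ uIcc a t, ‖g' u - g' a‖ ≤ C * |t - a| := fun u hu =>
    ((convex_uIcc a t).norm_image_sub_le_of_norm_hasDerivWithin_le
      (fun v hv => (hg' v (hI hv)).mono hI) (fun v hv => hC v (hI hv)) left_mem_uIcc hu).trans
      (mul_le_mul_of_nonneg_left (abs_sub_left_of_mem_uIcc hu) hC0)
  have hF : ∀ u ∈ uIcc a t, HasDerivWithinAt (fun u => g u - g a - g' a * (u - a))
      (g' u - g' a) (uIcc a t) u := fun u hu =>
    ((((hg u (hI hu)).mono hI).sub_const (g a)).sub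
      (((hasDerivWithinAt_id u _).sub_const a).const_mul (g' a))).congr_deriv (by ring)
  have := (convex_uIcc a t).norm_image_sub_le_of_norm_hasDerivWithin_le hF hg'_lip
    left_mem_uIcc right_mem_uIcc
  simp only [sub_self, mul_zero, sub_zero, Real.norm_eq_abs] at this
  rwa [mul_assoc, ← sq, sq_abs] at this

theorem CpMem.abs_sub_sub_mul_sub_le {p : ℕ} {g g' g'' : ℝ → ℝ} {a t : ℝ}
    (hg : ∀ x ≥ (0 : ℝ), HasDerivWithinAt g (g' x) (Ici 0) x)
    (hg' : ∀ x ≥ (0 : ℝ), HasDerivWithinAt g' (g'' x) (Ici 0) x) (hC : CpMem p g'')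
    (ha : 0 ≤ a) (ht : 0 ≤ t) :
    |g t - g a - g' a * (t - a)| ≤ pNorm p g'' * (1 + a ^ p + t ^ p) * (t - a) ^ 2 := by
  have hI : uIcc a t ⊆ Ici 0 := ordConnected_Ici.uIcc_subset ha ht
  refine abs_sub_sub_mul_sub_le_of_hasDerivWithinAt (convex_uIcc a t)
    (fun u hu => (hg u (hI hu)).mono hI) (fun u hu => (hg' u (hI hu)).mono hI) (fun u hu => ?_)
    left_mem_uIcc right_mem_uIcc
  have hu0 : 0 ≤ u := hI hu
  have hup : u ^ p ≤ a ^ p + t ^ p := by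
    rcases le_sup_iff.mp hu.2 with h | h
    · linarith [pow_le_pow_left₀ hu0 h p, pow_nonneg ht p]
    · linarith [pow_le_pow_left₀ hu0 h p, pow_nonneg ha p]
  calc |g'' u| ≤ pNorm p g'' * (1 + u ^ p) := hC.abs_le_pNorm_mul hu0
    _ ≤ pNorm p g'' * (1 + a ^ p + t ^ p) :=
      mul_le_mul_of_nonneg_left (by linarith) hC.pNorm_nonneg

section GammaOperator

variable {n k j : ℕ} {x : ℝ} {f g : ℝ → ℝ}

def MnkIntegrable (n k : ℕ) (f : ℝ → ℝ) (x : ℝ) : Prop :=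
  IntegrableOn (fun t => t ^ (n - k) / (x + t) ^ (2 * n - k + 2) * f t) (Ioi 0)

theorem MnkIntegrable.add (hf : MnkIntegrable n k f x) (hg : MnkIntegrable n k g x) :
    MnkIntegrable n k (fun t => f t + g t) x := by
  simp only [MnkIntegrable, mul_add]
  exact Integrable.add hf hg

theorem MnkIntegrable.sub (hf : MnkIntegrable n k f x) (hg : MnkIntegrable n k g x) :
    MnkIntegrable n k (fun t => f t - g t) x := by
  simp only [MnkIntegrable, mul_sub]
  exact Integrable.sub hf hg

theorem MnkIntegrable.const_mul (hf : MnkIntegrable n k f x) (c : ℝ) :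
    MnkIntegrable n k (fun t => c * f t) x := by
  simp only [MnkIntegrable, mul_left_comm _ c]
  exact Integrable.const_mul hf c

theorem Mnk_add (hf : MnkIntegrable n k f x) (hg : MnkIntegrable n k g x) :
    Mnk n k (fun t => f t + g t) x = Mnk n k f x + Mnk n k g x := by
  simp only [Mnk, mul_add]
  rw [integral_add hf hg, mul_add]

theorem Mnk_sub (hf : MnkIntegrable n k f x) (hg : MnkIntegrable n k g x) :
    Mnk n k (fun t => f t - g t) x = Mnk n k f x - Mnk n k g x := by
  simp only [Mnk, mul_sub]
  rw [integral_sub hf hg, mul_sub]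

theorem Mnk_const_mul (c : ℝ) : Mnk n k (fun t => c * f t) x = c * Mnk n k f x := by
  simp only [Mnk, mul_left_comm _ c]
  rw [integral_const_mul, mul_left_comm]

theorem abs_Mnk_le (hx : 0 ≤ x) (hg : MnkIntegrable n k g x) (hfg : ∀ t > 0, |f t| ≤ g t) :
    |Mnk n k f x| ≤ Mnk n k g x := by
  rw [Mnk, Mnk, abs_mul, abs_of_nonneg (by positivity)]
  gcongr
  rw [← Real.norm_eq_abs]
  refine norm_integral_le_of_norm_le hg ?_
  filter_upwards [ae_restrict_mem measurableSet_Ioi] with t (ht : 0 < t)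
  rw [Real.norm_eq_abs, abs_mul, abs_of_nonneg (by positivity)]
  exact mul_le_mul_of_nonneg_left (hfg t ht) (by positivity)

noncomputable def gammaMoment (n k j : ℕ) : ℝ := (n - k + j)! * (n - j)! / (n ! * (n - k)!)

theorem pow_div_add_pow_mul_pow (hk : k ≤ n) (hj : j ≤ n) (t : ℝ) :
    t ^ (n - k) / (x + t) ^ (2 * n - k + 2) * t ^ j =
      t ^ (n - k + j) / (x + t) ^ (n - k + j + (n - j) + 2) := by
  rw [show n - k + j + (n - j) + 2 = 2 * n - k + 2 by omega, pow_add]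
  ring

theorem mnkIntegrable_pow (hx : 0 < x) (hk : k ≤ n) (hj : j ≤ n) :
    MnkIntegrable n k (fun t => t ^ j) x := by
  simpa only [MnkIntegrable, pow_div_add_pow_mul_pow hk hj]
    using integrableOn_pow_div_add_pow hx (by omega)

theorem Mnk_pow (hx : 0 < x) (hk : k ≤ n) (hj : j ≤ n) :
    Mnk n k (fun t => t ^ j) x = gammaMoment n k j * x ^ j := by
  simp only [Mnk, pow_div_add_pow_mul_pow hk hj]
  rw [integral_pow_div_add_pow hx, gammaMoment,
    show n - k + j + (n - j) + 1 = 2 * n - k + 1 by omega, show n + 1 = n - j + 1 + j by omega,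
    pow_add]
  field_simp

theorem mnkIntegrable_of_abs_le {p : ℕ} {C : ℝ} (hx : 0 < x) (hk : k ≤ n) (hp : p ≤ n)
    (hf : ContinuousOn f (Ioi 0)) (hfC : ∀ t > 0, |f t| ≤ C * (1 + t ^ p)) :
    MnkIntegrable n k f x := by
  have hdom : MnkIntegrable n k (fun t => C * (t ^ 0 + t ^ p)) x :=
    ((mnkIntegrable_pow hx hk (Nat.zero_le n)).add (mnkIntegrable_pow hx hk hp)).const_mul C
  refine Integrable.mono' hdom (ContinuousOn.aestronglyMeasurable ?_ measurableSet_Ioi) ?_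
  · exact (ContinuousOn.div (by fun_prop) (by fun_prop) fun t (ht : 0 < t) => by positivity).mul
      hf
  · filter_upwards [ae_restrict_mem measurableSet_Ioi] with t (ht : 0 < t)
    rw [Real.norm_eq_abs, abs_mul, abs_of_nonneg (by positivity), pow_zero]
    exact mul_le_mul_of_nonneg_left (hfC t ht) (by positivity)

end GammaOperator

section GammaMoments

variable {n k j : ℕ}

noncomputable def gammaRatio (n k j : ℕ) : ℝ := ((n : ℝ) - k + 1 + j) / (n - j)

theorem gammaMoment_nonneg : 0 ≤ gammaMoment n k j := by
  unfold gammaMoment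
  positivity

theorem gammaMoment_zero : gammaMoment n k 0 = 1 := by
  rw [gammaMoment, add_zero, Nat.sub_zero, mul_comm]
  exact div_self (by positivity)

theorem gammaMoment_succ (hk : k ≤ n) (hj : j < n) :
    gammaMoment n k (j + 1) = gammaMoment n k j * gammaRatio n k j := by
  obtain ⟨m, hm⟩ : ∃ m, n - j = m + 1 := ⟨n - j - 1, by omega⟩
  have hcast : (n : ℝ) - j = m + 1 := by
    rw [← Nat.cast_sub hj.le, hm]; push_cast; ring
  rw [gammaMoment, gammaMoment, gammaRatio, hm, show n - (j + 1) = m by omega,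
    ← add_assoc, Nat.factorial_succ (n - k + j), Nat.factorial_succ m, hcast]
  push_cast [Nat.cast_sub hk]
  field_simp
  ring

theorem gammaMoment_one (hk : k ≤ n) (hn : 0 < n) : gammaMoment n k 1 = gammaRatio n k 0 := by
  rw [gammaMoment_succ hk hn, gammaMoment_zero, one_mul]

theorem gammaMoment_one_mul (hk : k ≤ n) (hn : 0 < n) (x : ℝ) :
    gammaMoment n k 1 * x = x + (1 - k) / n * x := by
  have hn' : (0 : ℝ) < n := by exact_mod_cast hn
  rw [gammaMoment_one hk hn, gammaRatio, Nat.cast_zero, add_zero, sub_zero]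
  field_simp
  ring

theorem gammaMoment_one_le_one (hk : 1 ≤ k) (hkn : k ≤ n) : gammaMoment n k 1 ≤ 1 := by
  have hk' : (1 : ℝ) ≤ k := by exact_mod_cast hk
  have hn' : (0 : ℝ) < n := by exact_mod_cast (by omega : 0 < n)
  rw [gammaMoment_one hkn (by omega), gammaRatio, div_le_one (by simpa using hn')]
  push_cast
  linarith

theorem gammaRatio_nonneg (hk : k ≤ n) (hj : j < n) : 0 ≤ gammaRatio n k j := by
  have hk' : (k : ℝ) ≤ n := by exact_mod_cast hk
  have hj' : (j : ℝ) < n := by exact_mod_cast hj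
  unfold gammaRatio
  exact div_nonneg (by linarith [j.cast_nonneg (α := ℝ)]) (by linarith)

theorem gammaRatio_le (hk : 1 ≤ k) (hj : j + 2 ≤ n) : gammaRatio n k j ≤ j + 2 := by
  have hk' : (1 : ℝ) ≤ k := by exact_mod_cast hk
  have hj' : (j : ℝ) + 2 ≤ n := by exact_mod_cast hj
  rw [gammaRatio, div_le_iff₀ (by linarith)]
  nlinarith [mul_nonneg j.cast_nonneg (by linarith : (0 : ℝ) ≤ n - j - 2)]

theorem gammaRatio_sub_gammaRatio_zero (hj : j < n) :
    gammaRatio n k j - gammaRatio n k 0 = j * (2 * n - k + 1) / (n * (n - j)) := by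
  have hj' : (j : ℝ) < n := by exact_mod_cast hj
  have hn : (0 : ℝ) < n := by linarith [j.cast_nonneg (α := ℝ)]
  rw [gammaRatio, gammaRatio, Nat.cast_zero, add_zero, sub_zero, div_sub_div _ _ (by linarith)
    hn.ne', div_eq_div_iff (by nlinarith) (by nlinarith)]
  ring

theorem gammaRatio_succ_sub (hj : j + 1 < n) :
    gammaRatio n k (j + 1) - gammaRatio n k j = (2 * n - k + 1) / ((n - j) * (n - j - 1)) := by
  have hj' : (j : ℝ) + 1 < n := by exact_mod_cast hj
  rw [gammaRatio, gammaRatio, Nat.cast_succ, div_sub_div _ _ (by linarith) (by linarith),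
    div_eq_div_iff (by nlinarith) (by nlinarith)]
  ring

theorem gammaRatio_zero_le (hk : k ≤ n) (hj : j < n) : gammaRatio n k 0 ≤ gammaRatio n k j := by
  have hk' : (k : ℝ) ≤ n := by exact_mod_cast hk
  have hj' : (j : ℝ) < n := by exact_mod_cast hj
  rw [← sub_nonneg, gammaRatio_sub_gammaRatio_zero hj]
  exact div_nonneg (mul_nonneg j.cast_nonneg (by linarith))
    (mul_nonneg (by linarith [j.cast_nonneg (α := ℝ)]) (by linarith))

theorem two_mul_le_add_two_mul_sub {j ν : ℝ} (hj : 0 ≤ j) (hjν : j + 2 ≤ ν) :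
    2 * ν ≤ (j + 2) * (ν - j) := by
  nlinarith [mul_nonneg hj (by linarith : 0 ≤ ν - j - 2)]

theorem gammaRatio_sub_gammaRatio_zero_le (hk : 1 ≤ k) (hj : j + 2 ≤ n) :
    gammaRatio n k j - gammaRatio n k 0 ≤ (j + 2) ^ 2 / n := by
  have hk' : (1 : ℝ) ≤ k := by exact_mod_cast hk
  have hj' : (j : ℝ) + 2 ≤ n := by exact_mod_cast hj
  have hj0 : (0 : ℝ) ≤ j := j.cast_nonneg
  rw [gammaRatio_sub_gammaRatio_zero (by omega), div_le_div_iff₀ (by nlinarith) (by linarith)]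
  have h2n := two_mul_le_add_two_mul_sub hj0 hj'
  nlinarith [mul_le_mul_of_nonneg_left h2n (by positivity : (0 : ℝ) ≤ (j + 2) * n),
    mul_nonneg (mul_nonneg hj0 (by linarith : (0 : ℝ) ≤ n)) (by linarith : (0 : ℝ) ≤ k - 1)]

theorem gammaRatio_le_succ (hk : k ≤ n) (hj : j + 2 ≤ n) :
    gammaRatio n k j ≤ gammaRatio n k (j + 1) := by
  have hk' : (k : ℝ) ≤ n := by exact_mod_cast hk
  have hj' : (j : ℝ) + 2 ≤ n := by exact_mod_cast hj
  rw [← sub_nonneg, gammaRatio_succ_sub (by omega)]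
  exact div_nonneg (by linarith) (mul_nonneg (by linarith) (by linarith))

theorem gammaRatio_succ_sub_le (hk : 1 ≤ k) (hj : j + 2 ≤ n) :
    gammaRatio n k (j + 1) - gammaRatio n k j ≤ (j + 2) ^ 2 / n := by
  have hk' : (1 : ℝ) ≤ k := by exact_mod_cast hk
  have hj' : (j : ℝ) + 2 ≤ n := by exact_mod_cast hj
  have hj0 : (0 : ℝ) ≤ j := j.cast_nonneg
  rw [gammaRatio_succ_sub (by omega), div_le_div_iff₀ (by nlinarith) (by linarith)]
  have h2n := two_mul_le_add_two_mul_sub hj0 hj'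
  have hn : (n : ℝ) ≤ (j + 2) * (n - j - 1) := by nlinarith
  nlinarith [mul_le_mul h2n hn (by linarith) (by nlinarith)]

theorem gammaMoment_le_pow (hk : 1 ≤ k) (hkn : k ≤ n) (hj : j + 1 ≤ n) :
    gammaMoment n k j ≤ (j + 1) ^ j := by
  induction j with
  | zero => simp [gammaMoment_zero]
  | succ j ih =>
    rw [gammaMoment_succ hkn (by omega), Nat.cast_succ, pow_succ]
    have hr := gammaRatio_le hk (j := j) (by omega)
    refine mul_le_mul ((ih (by omega)).trans (pow_le_pow_left₀ (by positivity) (by linarith) j))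
      (by linarith) (gammaRatio_nonneg hkn (by omega)) (by positivity)

end GammaMoments

section CentralMoments

variable {n k j : ℕ} {x : ℝ}

/-- `M_{n,k}(t^j (t - a)^2; x) = gammaCentralMoment n k j * x^(j+2)` for the mean
`a = M_{n,k}(t; x) = gammaMoment n k 1 * x`. -/
noncomputable def gammaCentralMoment (n k j : ℕ) : ℝ :=
  gammaMoment n k (j + 2) - 2 * gammaMoment n k 1 * gammaMoment n k (j + 1) +
    gammaMoment n k 1 ^ 2 * gammaMoment n k j

theorem gammaCentralMoment_eq (hk : k ≤ n) (hj : j + 2 ≤ n) :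
    gammaCentralMoment n k j = gammaMoment n k j *
      ((gammaRatio n k j - gammaRatio n k 0) ^ 2 +
        gammaRatio n k j * (gammaRatio n k (j + 1) - gammaRatio n k j)) := by
  rw [gammaCentralMoment, gammaMoment_succ hk (j := j + 1) (by omega),
    gammaMoment_succ hk (j := j) (by omega), gammaMoment_one hk (by omega)]
  ring

theorem gammaCentralMoment_le (hk : 1 ≤ k) (hkn : k ≤ n) (hj : j + 2 ≤ n) :
    gammaCentralMoment n k j ≤ 2 * (j + 2) ^ (j + 4) / n := by
  have hn : (1 : ℝ) ≤ n := by exact_mod_cast (by omega : 1 ≤ n)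
  have hr := gammaRatio_le hk hj
  have hr0 := gammaRatio_nonneg hkn (by omega : j < n)
  have hr0_le := gammaRatio_zero_le hkn (by omega : j < n)
  have hr_sub_r0 := gammaRatio_sub_gammaRatio_zero_le hk hj
  have hr_le_succ := gammaRatio_le_succ hkn hj
  have hsucc_sub_r := gammaRatio_succ_sub_le hk hj
  have hbracket : (gammaRatio n k j - gammaRatio n k 0) ^ 2 +
      gammaRatio n k j * (gammaRatio n k (j + 1) - gammaRatio n k j) ≤ 2 * (j + 2) ^ 4 / n := by
    calc _ ≤ (((j : ℝ) + 2) ^ 2 / n) ^ 2 + (j + 2) * ((j + 2) ^ 2 / n) := by gcongr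
      _ ≤ (j + 2) ^ 4 / n + (j + 2) ^ 4 / n := by
          rw [div_pow, ← pow_mul, mul_div_assoc']
          gcongr
          · nlinarith
          · nlinarith [pow_le_pow_right₀ (by linarith : (1 : ℝ) ≤ j + 2)
              (by norm_num : 3 ≤ 4)]
      _ = 2 * (j + 2) ^ 4 / n := by ring
  rw [gammaCentralMoment_eq hkn hj]
  calc _ ≤ ((j : ℝ) + 1) ^ j * (2 * (j + 2) ^ 4 / n) :=
        mul_le_mul (gammaMoment_le_pow hk hkn (by omega)) hbracket
          (by nlinarith [sq_nonneg (gammaRatio n k j - gammaRatio n k 0)]) (by positivity)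
    _ ≤ ((j : ℝ) + 2) ^ j * (2 * (j + 2) ^ 4 / n) := by gcongr; linarith
    _ = 2 * (j + 2) ^ (j + 4) / n := by ring

theorem gammaCentralMoment_le_of_le {m : ℕ} (hk : 1 ≤ k) (hkn : k ≤ n) (hjm : j ≤ m)
    (hm : m + 2 ≤ n) : gammaCentralMoment n k j ≤ 2 * (m + 2) ^ (m + 4) / n := by
  refine (gammaCentralMoment_le hk hkn (by omega)).trans ?_
  have hjm' : (j : ℝ) ≤ m := by exact_mod_cast hjm
  gcongr
  exact (pow_le_pow_left₀ (by positivity) (by linarith) _).trans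
    (pow_le_pow_right₀ (by linarith [m.cast_nonneg (α := ℝ)]) (by omega))

theorem pow_mul_sub_sq_eq (j : ℕ) (a : ℝ) : (fun t : ℝ => t ^ j * (t - a) ^ 2) =
    fun t => t ^ (j + 2) - 2 * a * t ^ (j + 1) + a ^ 2 * t ^ j := by
  ext t
  ring

theorem mnkIntegrable_pow_mul_sq_sub (hx : 0 < x) (hk : k ≤ n) (hj : j + 2 ≤ n) (a : ℝ) :
    MnkIntegrable n k (fun t => t ^ j * (t - a) ^ 2) x := by
  rw [pow_mul_sub_sq_eq]
  exact ((mnkIntegrable_pow hx hk hj).sub ((mnkIntegrable_pow hx hk (by omega)).const_mul _)).add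
    ((mnkIntegrable_pow hx hk (by omega)).const_mul _)

theorem Mnk_pow_mul_sq_sub (hx : 0 < x) (hk : k ≤ n) (hj : j + 2 ≤ n) (a : ℝ) :
    Mnk n k (fun t => t ^ j * (t - a) ^ 2) x =
      gammaMoment n k (j + 2) * x ^ (j + 2) - 2 * a * (gammaMoment n k (j + 1) * x ^ (j + 1)) +
        a ^ 2 * (gammaMoment n k j * x ^ j) := by
  have h2 := mnkIntegrable_pow hx hk hj
  have h1 := (mnkIntegrable_pow hx hk (j := j + 1) (by omega)).const_mul (2 * a)
  have h0 := (mnkIntegrable_pow hx hk (j := j) (by omega)).const_mul (a ^ 2)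
  rw [pow_mul_sub_sq_eq, Mnk_add (h2.sub h1) h0, Mnk_sub h2 h1, Mnk_const_mul, Mnk_const_mul,
    Mnk_pow hx hk hj, Mnk_pow hx hk (by omega), Mnk_pow hx hk (by omega)]

theorem abs_Mnk_sub_le {p : ℕ} {g : ℝ → ℝ} {a d Q : ℝ} (hx : 0 < x) (hk : k ≤ n)
    (hp : p + 2 ≤ n) (ha : gammaMoment n k 1 * x = a) (hg : MnkIntegrable n k g x)
    (hR : ∀ t > 0, |g t - g a - d * (t - a)| ≤ Q * (1 + a ^ p + t ^ p) * (t - a) ^ 2) :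
    |Mnk n k g x - g a| ≤
      Q * ((1 + a ^ p) * gammaCentralMoment n k 0 * x ^ 2 +
        gammaCentralMoment n k p * x ^ (p + 2)) := by
  subst ha
  set a := gammaMoment n k 1 * x
  have h0 := mnkIntegrable_pow hx hk (j := 0) (by omega)
  have h1 := mnkIntegrable_pow hx hk (j := 1) (by omega)
  have hreduce : Mnk n k g x - g a = Mnk n k (fun t => g t - g a - d * (t - a)) x := by
    have hexp : (fun t => g t - g a - d * (t - a)) =
        fun t => g t - ((g a - d * a) * t ^ 0 + d * t ^ 1) := by
      ext t; ring
    rw [hexp, Mnk_sub hg ((h0.const_mul _).add (h1.const_mul _)),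
      Mnk_add (h0.const_mul _) (h1.const_mul _), Mnk_const_mul, Mnk_const_mul,
      Mnk_pow hx hk (by omega), Mnk_pow hx hk (by omega), gammaMoment_zero]
    ring
  have hq0 :=
    (mnkIntegrable_pow_mul_sq_sub hx hk (j := 0) (by omega) a).const_mul (Q * (1 + a ^ p))
  have hqp := (mnkIntegrable_pow_mul_sq_sub hx hk hp a).const_mul Q
  have hdom := abs_Mnk_le hx.le (hq0.add hqp) fun t ht => (hR t ht).trans_eq (by ring)
  rw [Mnk_add hq0 hqp, Mnk_const_mul, Mnk_const_mul, Mnk_pow_mul_sq_sub hx hk (by omega),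
    Mnk_pow_mul_sq_sub hx hk hp] at hdom
  rw [hreduce]
  refine hdom.trans_eq ?_
  rw [gammaCentralMoment, gammaCentralMoment, gammaMoment_zero]
  ring

end CentralMoments

/-- Estimate for the auxiliary operator
`H_{n,k}(g;x) = M_{n,k}(g;x) − g(x+((1−k)/n)x) + g(x)` on twice differentiable
functions: `w_p(x)|H_{n,k}(g;x) − g(x)| ≤ N_{p,k}·‖g''‖_p·x²/n`. -/
theorem Hnk_estimate_C2 (k p : ℕ) (hk : 1 ≤ k) :
    ∃ N > (0 : ℝ), ∀ n : ℕ, k + p + 2 ≤ n → ∀ g g' g'' : ℝ → ℝ,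
      (∀ x ≥ (0 : ℝ), HasDerivWithinAt g (g' x) (Ici 0) x) →
      (∀ x ≥ (0 : ℝ), HasDerivWithinAt g' (g'' x) (Ici 0) x) →
      CpMem p g → CpMem p g' → CpMem p g'' →
      ∀ x : ℝ, 0 < x → 0 ≤ x + (1 - (k : ℝ)) / (n : ℝ) * x →
        wp p x *
            |(Mnk n k g x - g (x + (1 - (k : ℝ)) / (n : ℝ) * x) + g x) - g x| ≤
          N * pNorm p g'' * x ^ 2 / (n : ℝ) := by
  refine ⟨6 * (p + 2) ^ (p + 4), by positivity, ?_⟩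
  intro n hn g g' g'' hg hg' hCg _ hCg'' x hx _
  have hkn : k ≤ n := by omega
  set a := gammaMoment n k 1 * x with ha
  have ha0 : 0 ≤ a := mul_nonneg gammaMoment_nonneg hx.le
  have hax : a ≤ x := mul_le_of_le_one_left hx.le (gammaMoment_one_le_one hk hkn)
  have hgint : MnkIntegrable n k g x :=
    mnkIntegrable_of_abs_le hx hkn (by omega)
      (fun t ht => (hg t ht.out.le).continuousWithinAt.mono Ioi_subset_Ici_self)
      fun t ht => hCg.abs_le_pNorm_mul ht.le
  have hM := abs_Mnk_sub_le hx hkn (by omega) ha.symm hgint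
    fun t ht => hCg''.abs_sub_sub_mul_sub_le hg hg' ha0 ht.le
  have hS0 := gammaCentralMoment_le_of_le hk hkn (Nat.zero_le p) (by omega)
  have hSp := gammaCentralMoment_le_of_le (j := p) hk hkn le_rfl (by omega)
  have hQ := hCg''.pNorm_nonneg
  have hw := wp_pos (p := p) hx.le
  have hweight : wp p x * (1 + a ^ p) + wp p x * x ^ p ≤ 3 := by
    nlinarith [wp_le_one (p := p) hx.le, wp_mul_pow_le_one (p := p) hx.le,
      pow_le_pow_left₀ ha0 hax p]
  rw [← gammaMoment_one_mul hkn (by omega), add_sub_cancel_right]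
  calc wp p x * |Mnk n k g x - g a|
      ≤ wp p x * (pNorm p g'' * ((1 + a ^ p) * gammaCentralMoment n k 0 * x ^ 2 +
          gammaCentralMoment n k p * x ^ (p + 2))) := by gcongr
    _ ≤ wp p x * (pNorm p g'' * ((1 + a ^ p) * (2 * (p + 2) ^ (p + 4) / n) * x ^ 2 +
          2 * (p + 2) ^ (p + 4) / n * x ^ (p + 2))) := by gcongr
    _ = pNorm p g'' * x ^ 2 / n * (2 * (p + 2) ^ (p + 4)) *
          (wp p x * (1 + a ^ p) + wp p x * x ^ p) := by ring
    _ ≤ pNorm p g'' * x ^ 2 / n * (2 * (p + 2) ^ (p + 4)) * 3 := by gcongr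
    _ = 6 * (p + 2) ^ (p + 4) * pNorm p g'' * x ^ 2 / n := by ring
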